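/- arXiv:2401.06422 — 2 statements merged into one kernel-verified Lean document; each statement's English description precedes it below -/
import Mathlib

section
/- With α = arctan(tanφ / sinθ) for 0 < θ < π and 0 < φ < π/2, and B = (cosφ cosθ)² / ((cosφ sinθ)² + sin²φ), the modified elevation angle satisfies tan(φ̃) = sin(α − η) / √(B + cos²(α − η)), where φ̃ = arcsin(sinφ cosη − cosφ sinθ sinη) and η ∈ (−π/2 + α, π/2 + α). -/
/-!
Write `s = sin φ`, `c = cos φ sin θ > 0` and `r = √(s² + c²)`. Since `α = arctan (s / c)`, we have
`(cos α, sin α) = (c, s) / r`, so the sine of the elevation is `s cos η - c sin η = r sin (α - η)`.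
By Pythagoras `1 - r² = (cos φ cos θ)²`, i.e. `B = (1 - r²) / r²`, hence
`1 - r² sin² (α - η) = r² (B + cos² (α - η))` and `tan ∘ arcsin` gives the claim after cancelling `r`.
-/

open Real

namespace Real

lemma sqrt_one_add_div_sq {c : ℝ} (hc : 0 < c) (s : ℝ) :
    √(1 + (s / c) ^ 2) = √(s ^ 2 + c ^ 2) / c := by
  rw [← sqrt_sq hc.le, ← sqrt_div' _ (sq_nonneg c), sqrt_sq hc.le]
  congr 1
  field_simp
  ring

lemma cos_arctan_div {c : ℝ} (hc : 0 < c) (s : ℝ) :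
    cos (arctan (s / c)) = c / √(s ^ 2 + c ^ 2) := by
  rw [cos_arctan, sqrt_one_add_div_sq hc, one_div_div]

lemma sin_arctan_div {c : ℝ} (hc : 0 < c) (s : ℝ) :
    sin (arctan (s / c)) = s / √(s ^ 2 + c ^ 2) := by
  rw [sin_arctan, sqrt_one_add_div_sq hc]
  field_simp

lemma mul_cos_sub_mul_sin_eq_sqrt_mul_sin {c : ℝ} (hc : 0 < c) (s η : ℝ) :
    s * cos η - c * sin η = √(s ^ 2 + c ^ 2) * sin (arctan (s / c) - η) := by
  have hr : 0 < √(s ^ 2 + c ^ 2) := sqrt_pos.mpr (by positivity)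
  rw [sin_sub, sin_arctan_div hc, cos_arctan_div hc]
  field_simp

lemma tan_arcsin_mul_sin {r : ℝ} (hr : 0 < r) (β : ℝ) :
    tan (arcsin (r * sin β)) = sin β / √((1 - r ^ 2) / r ^ 2 + cos β ^ 2) := by
  have h : 1 - (r * sin β) ^ 2 = r ^ 2 * ((1 - r ^ 2) / r ^ 2 + cos β ^ 2) := by
    field_simp
    linear_combination (-r ^ 2) * sin_sq_add_cos_sq β
  rw [tan_arcsin, h, sqrt_mul (sq_nonneg r), sqrt_sq hr.le, mul_div_mul_left _ _ hr.ne']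

end Real

theorem tan_modified_elevation_general (θ φ η : ℝ)
    (hθ : 0 < θ) (hθ' : θ < π)
    (hφ : 0 < φ) (hφ' : φ < π / 2)
    (α B : ℝ)
    (hα : α = Real.arctan (Real.tan φ / Real.sin θ))
    (hB : B = (Real.cos φ * Real.cos θ) ^ 2 /
        ((Real.cos φ * Real.sin θ) ^ 2 + Real.sin φ ^ 2)) :
    Real.tan (Real.arcsin (Real.sin φ * Real.cos η - Real.cos φ * Real.sin θ * Real.sin η)) =
      Real.sin (α - η) / Real.sqrt (B + Real.cos (α - η) ^ 2) := by
  have hcos : 0 < cos φ := cos_pos_of_mem_Ioo ⟨by linarith [pi_pos], hφ'⟩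
  have hc : 0 < cos φ * sin θ := mul_pos hcos (sin_pos_of_pos_of_lt_pi hθ hθ')
  have hα' : α = arctan (sin φ / (cos φ * sin θ)) := by
    rw [hα, tan_eq_sin_div_cos, div_div]
  set r := √(sin φ ^ 2 + (cos φ * sin θ) ^ 2)
  have hr : 0 < r := sqrt_pos.mpr (by positivity)
  have hB' : B = (1 - r ^ 2) / r ^ 2 := by
    rw [hB, sq_sqrt (by positivity), add_comm (sin φ ^ 2)]
    congr 1
    linear_combination cos φ ^ 2 * sin_sq_add_cos_sq θ + sin_sq_add_cos_sq φ
  rw [mul_cos_sub_mul_sin_eq_sqrt_mul_sin hc, tan_arcsin_mul_sin hr, hα', hB']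

theorem tan_modified_elevation (θ φ η : ℝ)
    (hθ : 0 < θ) (hθ' : θ < π)
    (hφ : 0 < φ) (hφ' : φ < π / 2)
    (α B : ℝ)
    (hα : α = Real.arctan (Real.tan φ / Real.sin θ))
    (hB : B = (Real.cos φ * Real.cos θ) ^ 2 /
        ((Real.cos φ * Real.sin θ) ^ 2 + Real.sin φ ^ 2))
    (hη : -(π / 2) + α < η) (hη' : η < π / 2 + α) :
    Real.tan (Real.arcsin (Real.sin φ * Real.cos η - Real.cos φ * Real.sin θ * Real.sin η)) =
      Real.sin (α - η) / Real.sqrt (B + Real.cos (α - η) ^ 2) :=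
  tan_modified_elevation_general θ φ η hθ hθ' hφ hφ' α B hα hB
end

section
/- Let f(η) = sin^k(φ̃_A(η)) · sin^k(φ̃_D(η)) where φ̃_A(η) = arcsin(c_A sin(α_A − η)) and φ̃_D(η) = arcsin(c_D sin(η − α_D)) with constants c_A, c_D ∈ (0,1], α_D < α_A, α_A − α_D < π, and k ≥ 1 an even natural number (or any k with the sines nonnegative on [α_D, α_A]). If additionally c_A = c_D, then f is maximized over η ∈ [α_D, α_A] at the midpoint η* = (α_A + α_D)/2. -/
/-! Since `sin (arcsin x) = x` on `[-1, 1]`, the pattern is `(c_A c_D sin a sin b) ^ k` with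
`a = α_A - η`, `b = η - α_D` in `[0, π]` and `a + b = α_A - α_D` fixed. The identity
`sin (u + v) sin (u - v) = sin² u - sin² v` shows that the nonnegative product
`sin a sin b` is largest when `a = b`, i.e. at the midpoint. -/

open Real

theorem Real.sin_add_mul_sin_sub (u v : ℝ) :
    sin (u + v) * sin (u - v) = sin u ^ 2 - sin v ^ 2 := by
  rw [sin_add, sin_sub]
  linear_combination (sin u ^ 2) * sin_sq_add_cos_sq v - (sin v ^ 2) * sin_sq_add_cos_sq u

theorem Real.sin_add_mul_sin_sub_le_sin_sq (u v : ℝ) : sin (u + v) * sin (u - v) ≤ sin u ^ 2 := by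
  rw [sin_add_mul_sin_sub]
  exact sub_le_self _ (sq_nonneg _)

theorem Real.sin_arcsin_mul_sin {c : ℝ} (hc : |c| ≤ 1) (x : ℝ) :
    sin (arcsin (c * sin x)) = c * sin x := by
  have h : |c * sin x| ≤ 1 := by
    rw [abs_mul]
    exact mul_le_one₀ hc (abs_nonneg _) (abs_sin_le_one x)
  exact sin_arcsin (abs_le.mp h).1 (abs_le.mp h).2

theorem radiation_pattern_max_at_midpoint_general
    (cA cD αA αD : ℝ) (k : ℕ)
    (hcA : 0 < cA) (hcA' : cA ≤ 1) (hcD : 0 < cD) (hcD' : cD ≤ 1)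
    (hαπ : αA - αD < π)
    (f : ℝ → ℝ)
    (hf : ∀ η, f η =
        Real.sin (Real.arcsin (cA * Real.sin (αA - η))) ^ k *
        Real.sin (Real.arcsin (cD * Real.sin (η - αD))) ^ k) :
    ∀ η ∈ Set.Icc αD αA, f η ≤ f ((αA + αD) / 2) := by
  have hf' : ∀ η, f η = (cA * cD * (sin (αA - η) * sin (η - αD))) ^ k := fun η => by
    rw [hf, sin_arcsin_mul_sin (abs_le.mpr ⟨by linarith, hcA'⟩),
      sin_arcsin_mul_sin (abs_le.mpr ⟨by linarith, hcD'⟩), ← mul_pow]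
    ring
  rintro η ⟨hη₁, hη₂⟩
  have hsin_nonneg : 0 ≤ sin (αA - η) * sin (η - αD) :=
    mul_nonneg (sin_nonneg_of_nonneg_of_le_pi (by linarith) (by linarith))
      (sin_nonneg_of_nonneg_of_le_pi (by linarith) (by linarith))
  have hmid : sin (αA - (αA + αD) / 2) * sin ((αA + αD) / 2 - αD) = sin ((αA - αD) / 2) ^ 2 := by
    rw [sq]; congr 2 <;> ring
  have hkey : sin (αA - η) * sin (η - αD) ≤ sin ((αA - αD) / 2) ^ 2 := by
    have h := sin_add_mul_sin_sub_le_sin_sq ((αA - αD) / 2) ((αA + αD) / 2 - η)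
    rwa [show (αA - αD) / 2 + ((αA + αD) / 2 - η) = αA - η by ring,
      show (αA - αD) / 2 - ((αA + αD) / 2 - η) = η - αD by ring] at h
  rw [hf', hf', hmid]
  gcongr

theorem radiation_pattern_max_at_midpoint
    (cA cD αA αD : ℝ) (k : ℕ)
    (hcA : 0 < cA) (hcA' : cA ≤ 1) (hcD : 0 < cD) (hcD' : cD ≤ 1)
    (hα : αD < αA) (hαπ : αA - αD < π)
    (hk : 1 ≤ k) (hkeven : Even k)
    (hc : cA = cD)
    (f : ℝ → ℝ)
    (hf : ∀ η, f η =
        Real.sin (Real.arcsin (cA * Real.sin (αA - η))) ^ k *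
        Real.sin (Real.arcsin (cD * Real.sin (η - αD))) ^ k) :
    ∀ η ∈ Set.Icc αD αA, f η ≤ f ((αA + αD) / 2) :=
  radiation_pattern_max_at_midpoint_general cA cD αA αD k hcA hcA' hcD hcD' hαπ f hf
end
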